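/- arXiv:2301.07828 — 5 statements merged into one kernel-verified Lean document; each statement's English description precedes it below -/
import Mathlib

section
/- Let G be a skew-amenable topological group and let H be a pre-syndetic subgroup of G, equipped with the subspace topology. Then H is skew-amenable. -/
open scoped Topology

/-- A mean on the space of real-valued functions satisfying predicate `P`
(encoded as a functional on all functions whose mean-properties are required
only on functions satisfying `P`). -/
def IsMean {X : Type*} (P : (X → ℝ) → Prop) (μ : (X → ℝ) → ℝ) : Prop :=
  μ (fun _ => (1 : ℝ)) = 1 ∧
  (∀ f, P f → (∀ x, 0 ≤ f x) → 0 ≤ μ f) ∧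
  (∀ f g, P f → P g → μ (fun x => f x + g x) = μ f + μ g) ∧
  (∀ (c : ℝ) (f), P f → μ (fun x => c * f x) = c * μ f)

/-- `f : G → ℝ` is bounded and right uniformly continuous. -/
def IsRUCB (G : Type*) [Group G] [TopologicalSpace G] (f : G → ℝ) : Prop :=
  (∃ C, ∀ x, |f x| ≤ C) ∧
  ∀ ε : ℝ, 0 < ε → ∃ V ∈ 𝓝 (1 : G), ∀ v ∈ V, ∀ x, |f (v * x) - f x| < ε

/-- A topological group is skew-amenable if there is a right-invariant mean on `RUCB(G)`. -/
def SkewAmenable (G : Type*) [Group G] [TopologicalSpace G] : Prop :=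
  ∃ μ : (G → ℝ) → ℝ, IsMean (IsRUCB G) μ ∧
    ∀ (g : G) (f : G → ℝ), IsRUCB G f → μ (fun x => f (x * g)) = μ f

/-- A subgroup `H ≤ G` is pre-syndetic if for every identity neighbourhood `U`
there is a finite set `E` with `G = EUH`. -/
def PreSyndetic {G : Type*} [Group G] [TopologicalSpace G] (H : Subgroup G) : Prop :=
  ∀ U ∈ 𝓝 (1 : G), ∃ E : Finset G, ∀ g : G, ∃ e ∈ E, ∃ u ∈ U, ∃ h ∈ H, g = e * u * h

/-!
By Hahn–Banach, applied to the sublinear functional `f ↦ sup f` on `RUCB(H)`, `H` is skew-amenable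
as soon as no combination `φ` of differences `f (· * k) - f` (`f ∈ RUCB(H)`, `k ∈ H`) satisfies
`φ ≤ -c < 0`. Suppose one does. RUCB functions on `H` extend approximately to RUCB functions on `G`
(Katětov's extension along a uniformly continuous pseudometric for the right uniformity), which
turns `φ` into a combination `Φ` of differences `F (· * k) - F` on `G`, still with `k ∈ H`, such
that `Φ ≤ -c/2` on `H`. Right uniform continuity makes `a x = ⨆ h ∈ H, Φ (x h)` at most `-c/4`
on some `UH`, and `a` is right `H`-invariant, so the cut-offs `max 0 (-a (e⁻¹ x))` may multiply
the translates `Φ (e⁻¹ x)` without leaving the span. As finitely many `eUH` cover `G`, the sum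
over `e` of these products is negative everywhere on `G`, which no right-invariant mean on
`RUCB(G)` allows.
-/

open Filter Set Uniformity

open SetRel in
lemma exists_seq_symm_comp_subset {X : Type*} [UniformSpace X] {W : SetRel X X}
    (hW : W ∈ 𝓤 X) : ∃ V : ℕ → SetRel X X, (∀ n, V n ∈ 𝓤 X) ∧ (∀ n, (V n).IsSymm) ∧
      (∀ n, V (n + 1) ○ V (n + 1) ⊆ V n) ∧ V 0 ○ V 0 ⊆ W := by
  choose! half half_mem half_symm half_comp using
    fun s (hs : s ∈ 𝓤 X) => comp_symm_mem_uniformity_sets hs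
  let V : ℕ → SetRel X X := fun n => half^[n + 1] W
  have hV_succ : ∀ n, V (n + 1) = half (V n) := fun n => Function.iterate_succ_apply' half _ W
  have hV : ∀ n, V n ∈ 𝓤 X := by
    intro n
    induction n with
    | zero => exact half_mem W hW
    | succ n ih => rw [hV_succ]; exact half_mem _ ih
  refine ⟨V, hV, fun n => ?_, fun n => hV_succ n ▸ half_comp _ (hV n), half_comp W hW⟩
  cases n with
  | zero => exact half_symm W hW
  | succ n => rw [hV_succ]; exact half_symm _ (hV n)

open SetRel in
lemma exists_pseudoMetric_lt_one_subset {X : Type*} [UniformSpace X] {W : SetRel X X}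
    (hW : W ∈ 𝓤 X) : ∃ d : PseudoMetric X ℝ,
      (∀ ε > 0, {p : X × X | d p.1 p.2 < ε} ∈ 𝓤 X) ∧ {p : X × X | d p.1 p.2 < 1} ⊆ W := by
  obtain ⟨V, hV, hV_symm, hV_comp, hVW⟩ := exists_seq_symm_comp_subset hW
  have hV_sub_comp : ∀ n, V n ⊆ V n ○ V n := fun n =>
    have : (V n).IsRefl := SetRel.id_subset_iff.1 (refl_le_uniformity (hV n))
    SetRel.left_subset_comp
  have hV_anti : Antitone V := antitone_nat_of_succ_le fun n => (hV_sub_comp _).trans (hV_comp n)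
  have hF : (⨅ n, 𝓟 (V n)).HasBasis (fun _ => True) V := hasBasis_iInf_principal hV_anti.directed_ge
  -- the `V n` generate a countably generated, hence pseudometrizable, uniformity coarser than `𝓤 X`
  let u : UniformSpace X := .ofCore <| .mk' (⨅ n, 𝓟 (V n))
    (fun r hr x => by
      obtain ⟨n, -, hn⟩ := hF.mem_iff.1 hr
      exact hn (refl_mem_uniformity (hV n)))
    (fun r hr => by
      obtain ⟨n, -, hn⟩ := hF.mem_iff.1 hr
      have := hV_symm n
      exact hF.mem_iff.2 ⟨n, trivial, fun p hp => hn (SetRel.symm _ hp)⟩)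
    (fun r hr => by
      obtain ⟨n, -, hn⟩ := hF.mem_iff.1 hr
      exact ⟨V (n + 1), hF.mem_of_mem trivial, (hV_comp n).trans hn⟩)
  have : (@uniformity X u).IsCountablyGenerated := isCountablyGenerated_seq V
  obtain ⟨I, hI⟩ := @UniformSpace.metrizable_uniformity X u _
  have hIV : ∀ s, s ∈ @uniformity X I.toUniformSpace ↔ ∃ n, V n ⊆ s := fun s => by
    rw [hI]; exact hF.mem_iff.trans (by simp)
  obtain ⟨c, hc, hcV⟩ := (@Metric.mem_uniformity_dist X I (V 0)).1 ((hIV _).2 ⟨0, subset_rfl⟩)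
  refine ⟨⟨fun x y => @dist X I.toDist x y / c, fun x => by simp, fun x y => by
    rw [@dist_comm X I], fun x y z => by rw [← add_div]; gcongr; exact @dist_triangle X I x y z⟩,
    fun ε hε => ?_, fun p hp => ?_⟩
  · obtain ⟨n, hn⟩ := (hIV _).1 (@Metric.dist_mem_uniformity X I (ε * c) (by positivity))
    refine mem_of_superset (hV n) fun p hp => ?_
    simpa [div_lt_iff₀ hc] using hn hp
  · have hp : @dist X I.toDist p.1 p.2 < c := by simpa [div_lt_one hc] using hp
    exact hVW (hV_sub_comp 0 (hcV hp))

lemma PseudoMetric.uniformContinuous_of_le_add_mul {X : Type*} [UniformSpace X]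
    (d : PseudoMetric X ℝ) (hd : ∀ ε > 0, {p : X × X | d p.1 p.2 < ε} ∈ 𝓤 X) {F : X → ℝ}
    {K : ℝ} (hK : 0 ≤ K) (hF : ∀ x y, F x ≤ F y + K * d x y) : UniformContinuous F := by
  refine Metric.uniformity_basis_dist.tendsto_right_iff.2 fun δ hδ => ?_
  filter_upwards [hd (δ / (K + 1)) (by positivity)] with q hq
  have h1 := hF q.1 q.2
  have h2 := hF q.2 q.1
  rw [d.symm] at h2
  have : K * d q.1 q.2 < δ := by
    have := (lt_div_iff₀ (by positivity)).1 hq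
    nlinarith [d.nonneg q.1 q.2]
  rw [Real.dist_eq, abs_sub_lt_iff]
  constructor <;> linarith

lemma PseudoMetric.iInf_add_mul_min_le {X ι : Type*} [Nonempty ι] (d : PseudoMetric X ℝ)
    {f : ι → ℝ} (hf : BddBelow (range f)) (σ : ι → X) {L : ℝ} (hL : 0 ≤ L) (x y : X) :
    ⨅ i, f i + L * min 1 (d x (σ i)) ≤ (⨅ i, f i + L * min 1 (d y (σ i))) + L * d x y := by
  rw [← sub_le_iff_le_add]
  refine le_ciInf fun i => ?_
  have hmin : min 1 (d x (σ i)) ≤ min 1 (d y (σ i)) + d x y := by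
    have := d.triangle x y (σ i)
    have := d.nonneg x y
    rcases min_cases 1 (d y (σ i)) with h | h <;> rcases min_cases 1 (d x (σ i)) with h' | h' <;>
      linarith
  have hbdd : BddBelow (range fun i => f i + L * min 1 (d x (σ i))) := by
    obtain ⟨m, hm⟩ := hf
    refine ⟨m, ?_⟩
    rintro _ ⟨j, rfl⟩
    have := hm ⟨j, rfl⟩
    have := le_min zero_le_one (d.nonneg x (σ j))
    nlinarith
  have := ciInf_le hbdd i
  nlinarith

lemma exists_uniformContinuous_near {X : Type*} [UniformSpace X] {p : X → Prop}
    {f : Subtype p → ℝ} {M : ℝ} (hM : ∀ a, |f a| ≤ M) (hf : UniformContinuous f)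
    {ε : ℝ} (hε : 0 < ε) :
    ∃ F : X → ℝ, (∃ C, ∀ x, |F x| ≤ C) ∧ UniformContinuous F ∧
      ∀ a : Subtype p, |F a - f a| ≤ ε := by
  rcases isEmpty_or_nonempty (Subtype p) with hA | hA
  · exact ⟨fun _ => 0, ⟨0, by simp⟩, uniformContinuous_const, fun a => isEmptyElim a⟩
  obtain ⟨a₀⟩ := id hA
  have hM0 : 0 ≤ M := (abs_nonneg _).trans (hM a₀)
  obtain ⟨W, hW, hWf⟩ := mem_comap.1 (hf (Metric.dist_mem_uniformity hε))
  obtain ⟨d, hd_unif, hdW⟩ := exists_pseudoMetric_lt_one_subset hW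
  -- Katětov's formula: beyond `d`-distance 1 the penalty `2M` exceeds the oscillation of `f`
  let g : X → Subtype p → ℝ := fun x a => f a + 2 * M * min 1 (d x a)
  have hg_ge : ∀ x a, -M ≤ g x a := fun x a => by
    have := (abs_le.1 (hM a)).1
    have : 0 ≤ min 1 (d x a) := le_min zero_le_one (d.nonneg _ _)
    nlinarith
  have hg_bdd : ∀ x, BddBelow (range (g x)) := fun x => ⟨-M, by rintro _ ⟨a, rfl⟩; exact hg_ge x a⟩
  let F : X → ℝ := fun x => ⨅ a, g x a
  have hF_lip : ∀ x y, F x ≤ F y + 2 * M * d x y :=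
    d.iInf_add_mul_min_le (f := f) ⟨-M, by rintro _ ⟨a, rfl⟩; exact (abs_le.1 (hM a)).1⟩
      Subtype.val (by positivity)
  refine ⟨F, ⟨3 * M, fun x => abs_le.2 ⟨?_, ?_⟩⟩, ?_, fun a => abs_le.2 ⟨?_, ?_⟩⟩
  · linarith [le_ciInf (hg_ge x)]
  · calc F x ≤ g x a₀ := ciInf_le (hg_bdd x) a₀
      _ ≤ M + 2 * M * 1 := by
          have := (abs_le.1 (hM a₀)).2
          have := min_le_left 1 (d x a₀)
          simp only [g]; nlinarith
      _ = 3 * M := by ring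
  · exact d.uniformContinuous_of_le_add_mul hd_unif (by positivity) hF_lip
  · have hfb : ∀ b, f a - ε ≤ g a b := fun b => by
      have := (abs_le.1 (hM b)).1
      by_cases hab : d a b < 1
      · have : |f a - f b| < ε := @hWf (a, b) (hdW hab)
        rw [abs_sub_lt_iff] at this
        have : 0 ≤ min 1 (d a b) := le_min zero_le_one (d.nonneg _ _)
        simp only [g]; nlinarith
      · rw [not_lt] at hab
        simp only [g, min_eq_left hab]
        linarith [(abs_le.1 (hM a)).2]
    linarith [le_ciInf hfb]
  · have := ciInf_le (hg_bdd a) a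
    simp only [g, d.refl, min_eq_right zero_le_one, mul_zero, add_zero] at this
    linarith

namespace IsRUCB

variable {G : Type*} [Group G] [TopologicalSpace G] {f g : G → ℝ}

lemma bddAbove_range (hf : IsRUCB G f) : BddAbove (range f) := by
  obtain ⟨C, hC⟩ := hf.1
  exact ⟨C, by rintro _ ⟨x, rfl⟩; exact (le_abs_self _).trans (hC x)⟩

lemma const (c : ℝ) : IsRUCB G fun _ => c :=
  ⟨⟨|c|, fun _ => le_rfl⟩, fun ε hε => ⟨univ, univ_mem, fun _ _ _ => by simpa using hε⟩⟩

lemma add (hf : IsRUCB G f) (hg : IsRUCB G g) : IsRUCB G fun x => f x + g x := by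
  obtain ⟨⟨C, hC⟩, hf⟩ := hf
  obtain ⟨⟨D, hD⟩, hg⟩ := hg
  refine ⟨⟨C + D, fun x => (abs_add_le _ _).trans (add_le_add (hC x) (hD x))⟩, fun ε hε => ?_⟩
  obtain ⟨V, hV, hfV⟩ := hf (ε / 2) (half_pos hε)
  obtain ⟨W, hW, hgW⟩ := hg (ε / 2) (half_pos hε)
  refine ⟨V ∩ W, inter_mem hV hW, fun v hv x => ?_⟩
  calc |f (v * x) + g (v * x) - (f x + g x)|
      = |(f (v * x) - f x) + (g (v * x) - g x)| := by ring_nf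
    _ ≤ |f (v * x) - f x| + |g (v * x) - g x| := abs_add_le _ _
    _ < ε / 2 + ε / 2 := add_lt_add (hfV v hv.1 x) (hgW v hv.2 x)
    _ = ε := add_halves ε

lemma mul (hf : IsRUCB G f) (hg : IsRUCB G g) : IsRUCB G fun x => f x * g x := by
  obtain ⟨⟨C, hC⟩, hf⟩ := hf
  obtain ⟨⟨D, hD⟩, hg⟩ := hg
  have hC0 : 0 ≤ C := (abs_nonneg _).trans (hC 1)
  have hD0 : 0 ≤ D := (abs_nonneg _).trans (hD 1)
  refine ⟨⟨C * D, fun x => by rw [abs_mul]; exact mul_le_mul (hC x) (hD x) (abs_nonneg _) hC0⟩,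
    fun ε hε => ?_⟩
  obtain ⟨V, hV, hfV⟩ := hf (ε / (3 * (D + 1))) (by positivity)
  obtain ⟨W, hW, hgW⟩ := hg (ε / (3 * (C + 1))) (by positivity)
  refine ⟨V ∩ W, inter_mem hV hW, fun v hv x => ?_⟩
  have h1 := mul_le_mul (hfV v hv.1 x).le ((hD (v * x)).trans (le_add_of_nonneg_right zero_le_one))
    (abs_nonneg _) (by positivity)
  have h2 := mul_le_mul ((hC x).trans (le_add_of_nonneg_right zero_le_one)) (hgW v hv.2 x).le
    (abs_nonneg _) (by positivity)
  calc |f (v * x) * g (v * x) - f x * g x|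
      = |(f (v * x) - f x) * g (v * x) + f x * (g (v * x) - g x)| := by ring_nf
    _ ≤ |f (v * x) - f x| * |g (v * x)| + |f x| * |g (v * x) - g x| := by
        rw [← abs_mul, ← abs_mul]; exact abs_add_le _ _
    _ ≤ ε / (3 * (D + 1)) * (D + 1) + (C + 1) * (ε / (3 * (C + 1))) := add_le_add h1 h2
    _ < ε := by field_simp; linarith

lemma sub (hf : IsRUCB G f) (hg : IsRUCB G g) : IsRUCB G fun x => f x - g x := by
  simpa [sub_eq_add_neg] using hf.add ((const (-1)).mul hg)

lemma comp_mul_right (hf : IsRUCB G f) (g : G) : IsRUCB G fun x => f (x * g) := by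
  obtain ⟨⟨C, hC⟩, hf⟩ := hf
  refine ⟨⟨C, fun x => hC _⟩, fun ε hε => ?_⟩
  obtain ⟨V, hV, hfV⟩ := hf ε hε
  exact ⟨V, hV, fun v hv x => by simpa [mul_assoc] using hfV v hv (x * g)⟩

lemma comp_mul_left [IsTopologicalGroup G] (hf : IsRUCB G f) (g : G) :
    IsRUCB G fun x => f (g * x) := by
  obtain ⟨⟨C, hC⟩, hf⟩ := hf
  refine ⟨⟨C, fun x => hC _⟩, fun ε hε => ?_⟩
  obtain ⟨V, hV, hfV⟩ := hf ε hε
  have hconj : Tendsto (fun v => g * v * g⁻¹) (𝓝 1) (𝓝 1) := by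
    have : Continuous fun v => g * v * g⁻¹ := by fun_prop
    simpa using this.tendsto 1
  refine ⟨_, hconj hV, fun v hv x => ?_⟩
  simpa [mul_assoc] using hfV _ hv (g * x)

lemma comp_lipschitzWith {φ : ℝ → ℝ} {K : NNReal} (hφ : LipschitzWith K φ) (hf : IsRUCB G f) :
    IsRUCB G fun x => φ (f x) := by
  obtain ⟨⟨C, hC⟩, hf⟩ := hf
  refine ⟨⟨|φ 0| + K * C, fun x => ?_⟩, fun ε hε => ?_⟩
  · have := hφ.dist_le_mul (f x) 0
    rw [Real.dist_eq, Real.dist_eq, sub_zero] at this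
    have := abs_sub_abs_le_abs_sub (φ (f x)) (φ 0)
    nlinarith [hC x, K.2]
  · obtain ⟨V, hV, hfV⟩ := hf (ε / (K + 1)) (by positivity)
    refine ⟨V, hV, fun v hv x => ?_⟩
    have := hφ.dist_le_mul (f (v * x)) (f x)
    rw [Real.dist_eq, Real.dist_eq] at this
    calc |φ (f (v * x)) - φ (f x)| ≤ K * |f (v * x) - f x| := this
      _ ≤ K * (ε / (K + 1)) := by gcongr; exact (hfV v hv x).le
      _ < ε := by
        rw [mul_div_assoc', div_lt_iff₀ (by positivity)]; nlinarith [K.2]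

lemma iSup_mul_right {ι : Type*} [Nonempty ι] (hf : IsRUCB G f) (σ : ι → G) :
    IsRUCB G fun x => ⨆ i, f (x * σ i) := by
  have hbdd : ∀ x, BddAbove (range fun i => f (x * σ i)) :=
    fun x => hf.bddAbove_range.mono (range_comp_subset_range (x * σ ·) f)
  obtain ⟨⟨C, hC⟩, hf⟩ := hf
  refine ⟨⟨C, fun x => abs_le.2 ⟨?_, ciSup_le fun i => (abs_le.1 (hC _)).2⟩⟩, fun ε hε => ?_⟩
  · obtain ⟨i⟩ := ‹Nonempty ι›
    exact (abs_le.1 (hC _)).1.trans (le_ciSup (hbdd x) i)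
  obtain ⟨V, hV, hfV⟩ := hf (ε / 2) (half_pos hε)
  refine ⟨V, hV, fun v hv x => ?_⟩
  have hclose : ∀ y z, (∀ i, f (y * σ i) ≤ f (z * σ i) + ε / 2) →
      ⨆ i, f (y * σ i) ≤ (⨆ i, f (z * σ i)) + ε / 2 :=
    fun y z h => ciSup_le fun i => by linarith [h i, le_ciSup (hbdd z) i]
  have h1 := hclose (v * x) x fun i => by
    have := hfV v hv (x * σ i); rw [← mul_assoc] at this; linarith [(abs_lt.1 this).2]
  have h2 := hclose x (v * x) fun i => by
    have := hfV v hv (x * σ i); rw [← mul_assoc] at this; linarith [(abs_lt.1 this).1]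
  exact abs_sub_lt_iff.2 ⟨by linarith, by linarith⟩

end IsRUCB

section Means

variable {G : Type*} [Group G] [TopologicalSpace G]

variable (G) in
def rucb : Submodule ℝ (G → ℝ) where
  carrier := {f | IsRUCB G f}
  add_mem' := IsRUCB.add
  zero_mem' := IsRUCB.const 0
  smul_mem' c _ hf := (IsRUCB.const c).mul hf

variable (G) in
def rightDiffs (S : Set G) : Submodule ℝ (G → ℝ) :=
  Submodule.span ℝ {φ | ∃ f, IsRUCB G f ∧ ∃ g ∈ S, φ = fun x => f (x * g) - f x}

lemma rightDiffs_le_rucb (S : Set G) : rightDiffs G S ≤ rucb G :=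
  Submodule.span_le.2 fun _ ⟨_, hf, g, _, hφ⟩ => hφ ▸ (hf.comp_mul_right g).sub hf

lemma IsMean.apply_le {μ : (G → ℝ) → ℝ} (hμ : IsMean (IsRUCB G) μ) {f : G → ℝ} {c : ℝ}
    (hf : IsRUCB G f) (hfc : ∀ x, f x ≤ c) : μ f ≤ c := by
  obtain ⟨hone, hpos, hadd, hsmul⟩ := hμ
  have hconst : μ (fun _ => c) = c := by
    simpa [hone] using hsmul c (fun _ => 1) (IsRUCB.const 1)
  have hneg := hsmul (-1) f hf
  have := hpos _ ((IsRUCB.const c).add ((IsRUCB.const (-1)).mul hf)) fun x => by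
    linarith [hfc x]
  rw [hadd _ _ (IsRUCB.const c) ((IsRUCB.const (-1)).mul hf), hconst, hneg] at this
  linarith

lemma IsMean.apply_eq_zero_of_mem_rightDiffs {μ : (G → ℝ) → ℝ} (hμ : IsMean (IsRUCB G) μ)
    {S : Set G} (hinv : ∀ g ∈ S, ∀ f, IsRUCB G f → μ (fun x => f (x * g)) = μ f) {φ : G → ℝ}
    (hφ : φ ∈ rightDiffs G S) : μ φ = 0 := by
  obtain ⟨-, -, hadd, hsmul⟩ := hμ
  induction hφ using Submodule.span_induction with
  | mem ψ hψ =>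
    obtain ⟨f, hf, g, hg, rfl⟩ := hψ
    have := hadd _ _ (hf.comp_mul_right g) ((IsRUCB.const (-1)).mul hf)
    rw [hsmul _ _ hf, hinv g hg f hf] at this
    simpa [sub_eq_add_neg] using this
  | zero => simpa [Pi.zero_def] using hsmul 0 (fun _ => 1) (IsRUCB.const 1)
  | add ψ χ hψ hχ ihψ ihχ =>
    rw [show ψ + χ = fun x => ψ x + χ x from rfl, hadd _ _ (rightDiffs_le_rucb S hψ)
      (rightDiffs_le_rucb S hχ), ihψ, ihχ, add_zero]
  | smul a ψ hψ ih =>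
    rw [show a • ψ = fun x => a * ψ x from rfl, hsmul _ _ (rightDiffs_le_rucb S hψ), ih, mul_zero]

lemma SkewAmenable.not_forall_le_neg (hG : SkewAmenable G) {S : Set G} {φ : G → ℝ}
    (hφ : φ ∈ rightDiffs G S) {c : ℝ} (hc : 0 < c) : ¬ ∀ x, φ x ≤ -c := by
  obtain ⟨μ, hμ, hinv⟩ := hG
  intro hle
  have := hμ.apply_le (rightDiffs_le_rucb S hφ) hle
  rw [hμ.apply_eq_zero_of_mem_rightDiffs (fun g _ => hinv g) hφ] at this
  linarith

lemma skewAmenable_of_linearMap (Λ : rucb G →ₗ[ℝ] ℝ) (hΛ : ∀ f : rucb G, Λ f ≤ ⨆ x, f.1 x)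
    (hΛ_diff : ∀ f : rucb G, f.1 ∈ rightDiffs G univ → Λ f = 0) : SkewAmenable G := by
  classical
  let μ : (G → ℝ) → ℝ := fun f => if hf : f ∈ rucb G then Λ ⟨f, hf⟩ else 0
  have hμ : ∀ f (hf : IsRUCB G f), μ f = Λ ⟨f, hf⟩ := fun f hf => dif_pos hf
  refine ⟨μ, ⟨?_, fun f hf hpos => ?_, fun f g hf hg => ?_, fun c f hf => ?_⟩, fun g f hf => ?_⟩
  · have hone : IsRUCB G fun _ => (1 : ℝ) := IsRUCB.const 1
    have hle : Λ ⟨_, hone⟩ ≤ 1 := (hΛ _).trans_eq ciSup_const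
    have hge : Λ (-⟨_, hone⟩) ≤ -1 := (hΛ _).trans_eq (by simp)
    rw [hμ _ hone]
    linarith [map_neg Λ ⟨_, hone⟩]
  · have := hΛ (-⟨f, hf⟩)
    have : (⨆ x, (-⟨f, hf⟩ : rucb G).1 x) ≤ 0 := ciSup_le fun x => by simpa using hpos x
    rw [hμ f hf]
    linarith [map_neg Λ ⟨f, hf⟩]
  · rw [hμ f hf, hμ g hg, hμ _ (hf.add hg), ← map_add]
    rfl
  · rw [hμ f hf, hμ _ ((IsRUCB.const c).mul hf), ← smul_eq_mul, ← map_smul]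
    rfl
  · rw [hμ f hf, hμ _ (hf.comp_mul_right g), ← sub_eq_zero, ← map_sub]
    exact hΛ_diff _ (Submodule.subset_span ⟨f, hf, g, mem_univ g, rfl⟩)

lemma skewAmenable_of_forall_not_le_neg
    (h : ∀ φ ∈ rightDiffs G univ, ∀ c > 0, ¬ ∀ x, φ x ≤ -c) : SkewAmenable G := by
  let N : rucb G → ℝ := fun f => ⨆ x, f.1 x
  have N_hom : ∀ c : ℝ, 0 < c → ∀ f, N (c • f) = c * N f := fun c hc f =>
    (Real.mul_iSup_of_nonneg hc.le _).symm
  have N_add : ∀ f g, N (f + g) ≤ N f + N g := fun f g => ciSup_le fun x =>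
    add_le_add (le_ciSup f.2.bddAbove_range x) (le_ciSup g.2.bddAbove_range x)
  obtain ⟨Λ, hΛ_diff, hΛ⟩ := exists_extension_of_le_sublinear
    ⟨(rightDiffs G univ).comap (rucb G).subtype, 0⟩ N N_hom N_add fun φ => by
      by_contra! hneg
      exact h φ.1.1 φ.2 (-N φ) (neg_pos.2 hneg) fun x => by
        simpa using le_ciSup φ.1.2.bddAbove_range x
  exact skewAmenable_of_linearMap Λ hΛ fun f hf => hΛ_diff ⟨f, hf⟩

end Means

lemma max_zero_neg_mul_le_neg_sq {s t : ℝ} (hst : s ≤ t) : max 0 (-t) * s ≤ -max 0 (-t) ^ 2 := by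
  rcases max_cases 0 (-t) with ⟨h, -⟩ | ⟨h, hpos⟩ <;> rw [h]
  · simp
  · nlinarith

section CosetSup

variable {G : Type*} [Group G] {H : Subgroup G}

noncomputable def cosetSup (H : Subgroup G) (Φ : G → ℝ) (x : G) : ℝ := ⨆ h : H, Φ (x * h)

lemma IsRUCB.cosetSup [TopologicalSpace G] {Φ : G → ℝ} (hΦ : IsRUCB G Φ) :
    IsRUCB G (_root_.cosetSup H Φ) :=
  hΦ.iSup_mul_right Subtype.val

lemma IsRUCB.le_cosetSup [TopologicalSpace G] {Φ : G → ℝ} (hΦ : IsRUCB G Φ) (x : G) :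
    Φ x ≤ _root_.cosetSup H Φ x := by
  have hbdd : BddAbove (range fun h : H => Φ (x * h)) :=
    hΦ.bddAbove_range.mono (range_comp_subset_range (fun h : H => x * h) Φ)
  simpa [_root_.cosetSup] using le_ciSup hbdd 1

lemma cosetSup_mul_of_mem (Φ : G → ℝ) (x : G) {k : G} (hk : k ∈ H) :
    cosetSup H Φ (x * k) = cosetSup H Φ x := by
  simpa [cosetSup, mul_assoc] using
    (Equiv.mulLeft (⟨k, hk⟩ : H)).iSup_comp (g := fun h : H => Φ (x * h))

end CosetSup

section Subgroup

variable {G : Type*} [Group G] [TopologicalSpace G] [IsTopologicalGroup G] {H : Subgroup G}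

lemma IsRUCB.exists_approx_extension {f : H → ℝ} (hf : IsRUCB H f) {ε : ℝ} (hε : 0 < ε) :
    ∃ F : G → ℝ, IsRUCB G F ∧ ∀ h : H, |F h - f h| ≤ ε := by
  let := IsTopologicalGroup.rightUniformSpace G
  obtain ⟨⟨M, hM⟩, hf⟩ := hf
  have huc : UniformContinuous f := Metric.uniformity_basis_dist.tendsto_right_iff.2 fun δ hδ => by
    obtain ⟨V, hV, hfV⟩ := hf δ hδ
    obtain ⟨V', hV', hV'V⟩ := (mem_nhds_subtype (H : Set G) 1 V).1 hV
    filter_upwards [preimage_mem_comap (preimage_mem_comap hV')] with q hq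
    have hq : q.2 * q.1⁻¹ ∈ V := hV'V hq
    simpa [Real.dist_eq, abs_sub_comm] using hfV _ hq q.1
  obtain ⟨F, hFb, hFuc, hF⟩ := exists_uniformContinuous_near hM huc hε
  refine ⟨F, ⟨hFb, fun δ hδ => ?_⟩, hF⟩
  obtain ⟨V, hV, hVF⟩ := mem_comap.1 (hFuc (Metric.dist_mem_uniformity hδ))
  refine ⟨V, hV, fun v hv x => ?_⟩
  have : dist (F x) (F (v * x)) < δ := @hVF (x, v * x) (by simpa using hv)
  rwa [Real.dist_eq, abs_sub_comm] at this

lemma exists_rightDiffs_near {φ : H → ℝ} (hφ : φ ∈ rightDiffs H univ) {ε : ℝ} (hε : 0 < ε) :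
    ∃ Φ ∈ rightDiffs G H, ∀ h : H, |Φ h - φ h| ≤ ε := by
  induction hφ using Submodule.span_induction generalizing ε with
  | mem φ hφ =>
    obtain ⟨f, hf, k, -, rfl⟩ := hφ
    obtain ⟨F, hF, hFf⟩ := hf.exists_approx_extension (half_pos hε)
    refine ⟨fun x => F (x * k) - F x, Submodule.subset_span ⟨F, hF, k, k.2, rfl⟩, fun h => ?_⟩
    have h1 := hFf (h * k)
    have h2 := hFf h
    rw [Subgroup.coe_mul] at h1
    calc |F (h * k) - F h - (f (h * k) - f h)| ≤ |F (h * k) - f (h * k)| + |F h - f h| := by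
          rw [show F (h * k) - F h - (f (h * k) - f h) = (F (h * k) - f (h * k)) - (F h - f h)
            by ring]
          exact abs_sub _ _
      _ ≤ ε := by linarith
  | zero => exact ⟨0, zero_mem _, fun h => by simpa using hε.le⟩
  | add φ ψ _ _ ihφ ihψ =>
    obtain ⟨Φ, hΦ, hΦφ⟩ := ihφ (half_pos hε)
    obtain ⟨Ψ, hΨ, hΨψ⟩ := ihψ (half_pos hε)
    refine ⟨Φ + Ψ, add_mem hΦ hΨ, fun h => ?_⟩
    calc |(Φ + Ψ) h - (φ + ψ) h| = |(Φ h - φ h) + (Ψ h - ψ h)| := by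
          simp only [Pi.add_apply]; ring_nf
      _ ≤ |Φ h - φ h| + |Ψ h - ψ h| := abs_add_le _ _
      _ ≤ ε := by linarith [hΦφ h, hΨψ h]
  | smul a φ _ ih =>
    obtain ⟨Φ, hΦ, hΦφ⟩ := ih (ε := ε / (|a| + 1)) (by positivity)
    refine ⟨a • Φ, Submodule.smul_mem _ a hΦ, fun h => ?_⟩
    calc |(a • Φ) h - (a • φ) h| = |a| * |Φ h - φ h| := by
          simp only [Pi.smul_apply, smul_eq_mul]; rw [← mul_sub, abs_mul]
      _ ≤ (|a| + 1) * (ε / (|a| + 1)) :=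
          mul_le_mul (by linarith) (hΦφ h) (abs_nonneg _) (by positivity)
      _ = ε := by field_simp

lemma mul_comp_mul_left_mem_rightDiffs {S : Set G} {w : G → ℝ} (hw : IsRUCB G w)
    (hwS : ∀ x, ∀ s ∈ S, w (x * s) = w x) (g : G) {Φ : G → ℝ} (hΦ : Φ ∈ rightDiffs G S) :
    (fun x => w x * Φ (g * x)) ∈ rightDiffs G S := by
  induction hΦ using Submodule.span_induction with
  | mem Φ hΦ =>
    obtain ⟨F, hF, s, hs, rfl⟩ := hΦ
    refine Submodule.subset_span ⟨fun x => w x * F (g * x), hw.mul (hF.comp_mul_left g), s, hs, ?_⟩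
    ext x
    simp only [hwS x s hs, mul_assoc, mul_sub]
  | zero =>
    convert zero_mem (rightDiffs G S) using 1
    ext x
    simp
  | add Φ Ψ _ _ hΦ hΨ =>
    convert add_mem hΦ hΨ using 1
    ext x
    simp [mul_add]
  | smul a Φ _ hΦ =>
    convert Submodule.smul_mem _ a hΦ using 1
    ext x
    simp [mul_left_comm]

lemma exists_rightDiffs_le_neg_sq {Φ : G → ℝ} (hΦ : Φ ∈ rightDiffs G H) (E : Finset G) {c : ℝ}
    (hc : 0 ≤ c) (hE : ∀ x, ∃ e ∈ E, cosetSup H Φ (e⁻¹ * x) ≤ -c) :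
    ∃ Ψ ∈ rightDiffs G H, ∀ x, Ψ x ≤ -c ^ 2 := by
  have hΦr : IsRUCB G Φ := rightDiffs_le_rucb _ hΦ
  let w : G → G → ℝ := fun e x => max 0 (-cosetSup H Φ (e⁻¹ * x))
  have hw : ∀ e, IsRUCB G (w e) := fun e =>
    (hΦr.cosetSup.comp_mul_left e⁻¹).comp_lipschitzWith (φ := fun t => max 0 (-t))
      (LipschitzWith.id.neg.const_max 0)
  have hw_inv : ∀ e x, ∀ k ∈ H, w e (x * k) = w e x := fun e x k hk => by
    simp only [w, ← mul_assoc, cosetSup_mul_of_mem Φ _ hk]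
  have hterm : ∀ e x, w e x * Φ (e⁻¹ * x) ≤ -w e x ^ 2 := fun e x =>
    max_zero_neg_mul_le_neg_sq (hΦr.le_cosetSup _)
  refine ⟨∑ e ∈ E, fun x => w e x * Φ (e⁻¹ * x),
    Submodule.sum_mem _ fun e _ => mul_comp_mul_left_mem_rightDiffs (hw e) (hw_inv e) e⁻¹ hΦ,
    fun x => ?_⟩
  obtain ⟨e, he, hex⟩ := hE x
  have hwe : c ≤ w e x := le_max_of_le_right (by linarith)
  rw [Finset.sum_apply]
  calc ∑ e' ∈ E, w e' x * Φ (e'⁻¹ * x) ≤ ∑ e' ∈ {e}, w e' x * Φ (e'⁻¹ * x) :=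
        Finset.sum_le_sum_of_subset_of_nonpos' (by simpa using he) fun e' _ _ =>
          (hterm e' x).trans (neg_nonpos.2 (sq_nonneg _))
    _ ≤ -c ^ 2 := by
        rw [Finset.sum_singleton]
        nlinarith [hterm e x]

lemma exists_rightDiffs_le_neg_of_preSyndetic (hH : PreSyndetic H) {Φ : G → ℝ}
    (hΦ : Φ ∈ rightDiffs G H) {c : ℝ} (hc : 0 < c) (hΦc : ∀ h : H, Φ h ≤ -c) :
    ∃ Ψ ∈ rightDiffs G H, ∀ x, Ψ x ≤ -(c / 2) ^ 2 := by
  obtain ⟨V, hV, hΦV⟩ := (rightDiffs_le_rucb _ hΦ).2 (c / 2) (half_pos hc)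
  obtain ⟨E, hE⟩ := hH V hV
  refine exists_rightDiffs_le_neg_sq hΦ E (half_pos hc).le fun x => ?_
  obtain ⟨e, he, u, hu, h, hh, rfl⟩ := hE x
  refine ⟨e, he, ciSup_le fun k => ?_⟩
  have h1 := hΦV u hu (h * k)
  have h2 := hΦc (⟨h, hh⟩ * k)
  rw [Subgroup.coe_mul] at h2
  have : e⁻¹ * (e * u * h) * k = u * (h * k) := by group
  simp only [this]
  linarith [(abs_lt.1 h1).2]

end Subgroup

theorem presyndetic_subgroup_skewAmenable {G : Type*} [Group G] [TopologicalSpace G]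
    [IsTopologicalGroup G] (hG : SkewAmenable G) (H : Subgroup G) (hH : PreSyndetic H) :
    SkewAmenable ↥H := by
  refine skewAmenable_of_forall_not_le_neg fun φ hφ c hc hφc => ?_
  obtain ⟨Φ, hΦ, hΦφ⟩ := exists_rightDiffs_near hφ (half_pos hc)
  obtain ⟨Ψ, hΨ, hΨc⟩ := exists_rightDiffs_le_neg_of_preSyndetic hH hΦ (half_pos hc) fun h => by
    linarith [(abs_le.1 (hΦφ h)).2, hφc h]
  exact hG.not_forall_le_neg hΨ (by positivity) hΨc
end

section
/- Let G be a topological group, let d, d₀ ∈ Δ(G) with d₀(x,y) ≤ d(x,y) for all x, y, let H be a subgroup of G, let f : H → ℝ be 1-Lipschitz with respect to the restriction of d₀, and let t ∈ (0,1]. Then |f^d(x)| · χ_{H,t⁻¹d}(x) ≤ (‖f‖_∞ + t) · χ_{H,t⁻¹d}(x) for all x ∈ G, where ‖f‖_∞ = sup_{h ∈ H} |f(h)| and t⁻¹d denotes the rescaled pseudo-metric (x,y) ↦ t⁻¹ d(x,y), which again belongs to Δ(G). -/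
open scoped Topology

/-- `d` is a bounded right-invariant continuous pseudo-metric on `G`,
i.e. an element of `Δ(G)`. -/
def InDelta (G : Type*) [Group G] [TopologicalSpace G] (d : G → G → ℝ) : Prop :=
  (∀ x y, 0 ≤ d x y) ∧ (∀ x, d x x = 0) ∧ (∀ x y, d x y = d y x) ∧
  (∀ x y z, d x z ≤ d x y + d y z) ∧ (∃ C, ∀ x y, d x y ≤ C) ∧
  Continuous (fun p : G × G => d p.1 p.2) ∧
  (∀ x y g, d (x * g) (y * g) = d x y)

/-- The function `χ_{H,d}(x) = max (1 - inf_{h ∈ H} d(x,h)) 0`. -/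
noncomputable def chi {G : Type*} [Group G] (H : Subgroup G) (d : G → G → ℝ) (x : G) : ℝ :=
  max (1 - ⨅ h : ↥H, d x (h : G)) 0

/-- The extension `f^d(x) = inf_{h ∈ H} (f(h) + d(x,h))` of `f : H → ℝ` to `G`. -/
noncomputable def extd {G : Type*} [Group G] (H : Subgroup G) (d : G → G → ℝ)
    (f : ↥H → ℝ) (x : G) : ℝ :=
  ⨅ h : ↥H, (f h + d x (h : G))

/-!
Where `χ_{H,t⁻¹d}(x) ≠ 0` some `h₀ ∈ H` satisfies `d(x, h₀) < t`. As `d₀ ≤ d`, `f` is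
`1`-Lipschitz for `d`, so every `f(h) + d(x, h)` is at least `f(h₀) - d(x, h₀)`; hence `f^d(x)` lies
within `d(x, h₀)` of `f(h₀)` and `|f^d(x)| ≤ ‖f‖_∞ + t`.
-/

section LipschitzExtension

variable {α ι : Type*} {d : α → α → ℝ} {e : ι → α} {f : ι → ℝ}

theorem bddAbove_range_abs_of_lipschitz {C : ℝ} (hf : ∀ i j, |f i - f j| ≤ d (e i) (e j))
    (hC : ∀ x y, d x y ≤ C) : BddAbove (Set.range fun i => |f i|) := by
  rcases isEmpty_or_nonempty ι with _ | ⟨⟨j⟩⟩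
  · simp [Set.range_eq_empty]
  · refine ⟨|f j| + C, ?_⟩
    rintro _ ⟨i, rfl⟩
    linarith [abs_sub_abs_le_abs_sub (f i) (f j), hf i j, hC (e i) (e j)]

theorem sub_le_add_of_lipschitz (hsymm : ∀ x y, d x y = d y x)
    (htri : ∀ x y z, d x z ≤ d x y + d y z) (hf : ∀ i j, |f i - f j| ≤ d (e i) (e j))
    (x : α) (i₀ i : ι) : f i₀ - d x (e i₀) ≤ f i + d x (e i) := by
  have hf' : f i₀ - f i ≤ d (e i₀) (e i) := (le_abs_self _).trans (hf i₀ i)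
  have htri' : d (e i₀) (e i) ≤ d x (e i₀) + d x (e i) := hsymm x (e i₀) ▸ htri _ x _
  linarith

theorem abs_iInf_add_le_of_lipschitz (hsymm : ∀ x y, d x y = d y x)
    (htri : ∀ x y z, d x z ≤ d x y + d y z) (hf : ∀ i j, |f i - f j| ≤ d (e i) (e j))
    (x : α) (i₀ : ι) : |⨅ i, (f i + d x (e i))| ≤ |f i₀| + d x (e i₀) := by
  have hlow := sub_le_add_of_lipschitz hsymm htri hf x i₀
  have hbdd : BddBelow (Set.range fun i => f i + d x (e i)) :=
    ⟨_, by rintro _ ⟨i, rfl⟩; exact hlow i⟩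
  rw [abs_le]
  constructor
  · have : f i₀ - d x (e i₀) ≤ ⨅ i, (f i + d x (e i)) :=
      haveI : Nonempty ι := ⟨i₀⟩; le_ciInf hlow
    linarith [neg_abs_le (f i₀)]
  · linarith [ciInf_le hbdd i₀, le_abs_self (f i₀)]

end LipschitzExtension

theorem exists_lt_one_of_chi_ne_zero {G : Type*} [Group G] {H : Subgroup G} {d : G → G → ℝ}
    {x : G} (hx : chi H d x ≠ 0) : ∃ h : ↥H, d x h < 1 := by
  by_contra! hge
  exact hx (max_eq_right (by linarith [le_ciInf hge]))

theorem extd_bound_on_chi_general {G : Type*} [Group G] [TopologicalSpace G]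
    (d d₀ : G → G → ℝ) (hd : InDelta G d)
    (hle : ∀ x y : G, d₀ x y ≤ d x y) (H : Subgroup G)
    (f : ↥H → ℝ) (hf : ∀ h h' : ↥H, |f h - f h'| ≤ d₀ (h : G) (h' : G))
    (t : ℝ) (ht : t ∈ Set.Ioc (0 : ℝ) 1) :
    ∀ x : G, |extd H d f x| * chi H (fun a b => t⁻¹ * d a b) x ≤
      ((⨆ h : ↥H, |f h|) + t) * chi H (fun a b => t⁻¹ * d a b) x := by
  obtain ⟨-, -, hsymm, htri, ⟨C, hC⟩, -, -⟩ := hd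
  have hfd : ∀ h h' : ↥H, |f h - f h'| ≤ d h h' := fun h h' => (hf h h').trans (hle _ _)
  intro x
  by_cases hχ : chi H (fun a b => t⁻¹ * d a b) x = 0
  · simp [hχ]
  obtain ⟨h₀, hh₀⟩ := exists_lt_one_of_chi_ne_zero hχ
  have hdist : d x h₀ < t := by
    rwa [inv_mul_lt_iff₀ ht.1, mul_one] at hh₀
  gcongr
  · exact le_max_right _ _
  calc |extd H d f x| ≤ |f h₀| + d x h₀ := abs_iInf_add_le_of_lipschitz hsymm htri hfd x h₀
    _ ≤ (⨆ h : ↥H, |f h|) + t :=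
      add_le_add (le_ciSup (bddAbove_range_abs_of_lipschitz hfd hC) h₀) hdist.le

theorem extd_bound_on_chi {G : Type*} [Group G] [TopologicalSpace G] [IsTopologicalGroup G]
    (d d₀ : G → G → ℝ) (hd : InDelta G d) (hd₀ : InDelta G d₀)
    (hle : ∀ x y : G, d₀ x y ≤ d x y) (H : Subgroup G)
    (f : ↥H → ℝ) (hf : ∀ h h' : ↥H, |f h - f h'| ≤ d₀ (h : G) (h' : G))
    (t : ℝ) (ht : t ∈ Set.Ioc (0 : ℝ) 1) :
    ∀ x : G, |extd H d f x| * chi H (fun a b => t⁻¹ * d a b) x ≤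
      ((⨆ h : ↥H, |f h|) + t) * chi H (fun a b => t⁻¹ * d a b) x :=
  extd_bound_on_chi_general d d₀ hd hle H f hf t ht
end

section
/- Let G be a topological group, let d, d₀ ∈ Δ(G) and r ∈ ℝ with d₀ ≤ d and |r|·d₀(x,y) ≤ d(x,y) for all x, y, let H be a subgroup of G, let f : H → ℝ be 1-Lipschitz with respect to the restriction of d₀, and let t ∈ (0,1]. Then |(r·f)^d(x) − r·f^d(x)| · χ_{H,t⁻¹d}(x) ≤ (|r| + 1)·t · χ_{H,t⁻¹d}(x) for all x ∈ G, where t⁻¹d denotes the rescaled pseudo-metric (x,y) ↦ t⁻¹ d(x,y). -/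
/-! Where `χ_{H,t⁻¹d}(x) > 0` there is `h₀ ∈ H` with `d(x,h₀) < t`. An infimal extension of a
function that is `1`-Lipschitz for `d` lies within `d(x,h₀)` of its value at `h₀`; applied to `r·f`
and to `f` (scaled by `r`) this bounds the difference by `(1 + |r|)·d(x,h₀) < (|r| + 1)·t`. -/

open scoped Topology

section Extension

variable {G : Type*} [Group G] (H : Subgroup G) {d : G → G → ℝ}

lemma exists_lt_one_of_chi_pos {x : G} (hx : 0 < chi H d x) : ∃ h : ↥H, d x h < 1 := by
  have : (⨅ h : ↥H, d x h) < 1 := by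
    by_contra! hge
    have : chi H d x = 0 := max_eq_right (by linarith)
    linarith
  exact exists_lt_of_ciInf_lt this

lemma abs_extd_sub_le (hsymm : ∀ x y, d x y = d y x) (htri : ∀ x y z, d x z ≤ d x y + d y z)
    {g : ↥H → ℝ} (hg : ∀ h h' : ↥H, |g h - g h'| ≤ d h h') (x : G)
    (h₀ : ↥H) : |extd H d g x - g h₀| ≤ d x h₀ := by
  have hlower : ∀ h : ↥H, g h₀ - d x h₀ ≤ g h + d x h := fun h => by
    have := htri h₀ x h
    have := hsymm h₀ x
    have := (le_abs_self _).trans (hg h₀ h)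
    linarith
  have hbdd : BddBelow (Set.range fun h : ↥H => g h + d x h) :=
    ⟨g h₀ - d x h₀, by rintro _ ⟨h, rfl⟩; exact hlower h⟩
  have hle : extd H d g x ≤ g h₀ + d x h₀ := ciInf_le hbdd h₀
  have hge : g h₀ - d x h₀ ≤ extd H d g x := le_ciInf hlower
  rw [abs_sub_le_iff]
  constructor <;> linarith

lemma abs_extd_mul_sub_mul_extd_le (hsymm : ∀ x y, d x y = d y x)
    (htri : ∀ x y z, d x z ≤ d x y + d y z) {f : ↥H → ℝ} {r : ℝ}
    (hf : ∀ h h' : ↥H, |f h - f h'| ≤ d h h') (hrf : ∀ h h' : ↥H, |r * f h - r * f h'| ≤ d h h')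
    (x : G) (h₀ : ↥H) :
    |extd H d (fun h => r * f h) x - r * extd H d f x| ≤ (|r| + 1) * d x h₀ :=
  calc |extd H d (fun h => r * f h) x - r * extd H d f x|
      ≤ |extd H d (fun h => r * f h) x - r * f h₀| + |r * f h₀ - r * extd H d f x| :=
        abs_sub_le _ _ _
    _ ≤ d x h₀ + |r| * d x h₀ := by
        gcongr
        · exact abs_extd_sub_le H hsymm htri hrf x h₀
        · rw [← mul_sub, abs_mul, abs_sub_comm]
          gcongr
          exact abs_extd_sub_le H hsymm htri hf x h₀
    _ = (|r| + 1) * d x h₀ := by ring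

end Extension

theorem extd_almost_homogeneous_on_chi_general {G : Type*} [Group G] [TopologicalSpace G]
    (d d₀ : G → G → ℝ) (r : ℝ) (hd : InDelta G d)
    (hle : ∀ x y : G, d₀ x y ≤ d x y) (hler : ∀ x y : G, |r| * d₀ x y ≤ d x y)
    (H : Subgroup G)
    (f : ↥H → ℝ) (hf : ∀ h h' : ↥H, |f h - f h'| ≤ d₀ (h : G) (h' : G))
    (t : ℝ) (ht : t ∈ Set.Ioc (0 : ℝ) 1) :
    ∀ x : G, |extd H d (fun h => r * f h) x - r * extd H d f x| *
        chi H (fun a b => t⁻¹ * d a b) x ≤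
      (|r| + 1) * t * chi H (fun a b => t⁻¹ * d a b) x := by
  obtain ⟨-, -, hsymm, htri, -⟩ := hd
  have hf_d : ∀ h h' : ↥H, |f h - f h'| ≤ d h h' := fun h h' => (hf h h').trans (hle _ _)
  have hrf_d : ∀ h h' : ↥H, |r * f h - r * f h'| ≤ d h h' := fun h h' => by
    rw [← mul_sub, abs_mul]
    exact (mul_le_mul_of_nonneg_left (hf h h') (abs_nonneg r)).trans (hler _ _)
  intro x
  have hchi_nonneg : 0 ≤ chi H (fun a b => t⁻¹ * d a b) x := le_max_right _ _
  rcases hchi_nonneg.eq_or_lt with hchi | hchi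
  · simp [← hchi]
  obtain ⟨h₀, hh₀⟩ := exists_lt_one_of_chi_pos H hchi
  have hdx : d x h₀ < t := by rwa [inv_mul_lt_iff₀ ht.1, mul_one] at hh₀
  gcongr
  calc _ ≤ (|r| + 1) * d x h₀ := abs_extd_mul_sub_mul_extd_le H hsymm htri hf_d hrf_d x h₀
    _ ≤ (|r| + 1) * t := by gcongr

theorem extd_almost_homogeneous_on_chi {G : Type*} [Group G] [TopologicalSpace G]
    [IsTopologicalGroup G] (d d₀ : G → G → ℝ) (r : ℝ) (hd : InDelta G d) (hd₀ : InDelta G d₀)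
    (hle : ∀ x y : G, d₀ x y ≤ d x y) (hler : ∀ x y : G, |r| * d₀ x y ≤ d x y)
    (H : Subgroup G)
    (f : ↥H → ℝ) (hf : ∀ h h' : ↥H, |f h - f h'| ≤ d₀ (h : G) (h' : G))
    (t : ℝ) (ht : t ∈ Set.Ioc (0 : ℝ) 1) :
    ∀ x : G, |extd H d (fun h => r * f h) x - r * extd H d f x| *
        chi H (fun a b => t⁻¹ * d a b) x ≤
      (|r| + 1) * t * chi H (fun a b => t⁻¹ * d a b) x :=
  extd_almost_homogeneous_on_chi_general d d₀ r hd hle hler H f hf t ht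
end

section
/- Let X be a measurable space and let F : ℝX → ℝ be a linear functional for which there exist a countable partition 𝒫 of X into measurable sets and a constant C ≥ 0 such that |F(a)| ≤ C·‖a‖_𝒫 for all a ∈ ℝX. Then the function X → ℝ, x ↦ F(δ_x), is bounded and measurable, where δ_x ∈ ℝX is the function taking value 1 at x and 0 elsewhere. -/
open scoped Pointwise

/-- A countable partition of a measurable space into measurable sets. -/
def IsCtblMeasPartition {X : Type*} [MeasurableSpace X] (Ps : Set (Set X)) : Prop :=
  Ps.Countable ∧ (∀ P ∈ Ps, MeasurableSet P) ∧
  Ps.PairwiseDisjoint id ∧ ⋃₀ Ps = Set.univ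

/-- The seminorm `‖a‖_Ps = Σ_{P ∈ Ps} |Σ_{x ∈ P} a x|` on finitely supported functions. -/
noncomputable def pnorm {X : Type*} (Ps : Set (Set X)) (a : X →₀ ℝ) : ℝ :=
  ∑' P : Ps, |∑ x ∈ a.support, (P : Set X).indicator (fun y => a y) x|

theorem pnorm_continuous_functional_gives_bddMeasurable {X : Type*} [MeasurableSpace X]
    (F : (X →₀ ℝ) →ₗ[ℝ] ℝ)
    (h : ∃ Ps : Set (Set X), IsCtblMeasPartition Ps ∧
      ∃ C : ℝ, 0 ≤ C ∧ ∀ a : X →₀ ℝ, |F a| ≤ C * pnorm Ps a) :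
    (∃ C : ℝ, ∀ x : X, |F (Finsupp.single x 1)| ≤ C) ∧
    Measurable (fun x : X => F (Finsupp.single x 1)) := by
  classical
  obtain ⟨Ps, ⟨hcnt, hmeasP, hdisj, hcover⟩, C, hC, hF⟩ := h
  have hex : ∀ x : X, ∃ P ∈ Ps, x ∈ P := by
    intro x
    have : x ∈ ⋃₀ Ps := hcover ▸ Set.mem_univ x
    simpa using this
  have huniq : ∀ {P Q : Set X}, P ∈ Ps → Q ∈ Ps → ∀ {x : X}, x ∈ P → x ∈ Q → P = Q := by
    intro P Q hP hQ x hxP hxQ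
    by_contra hne
    exact Set.disjoint_left.mp (hdisj hP hQ hne) hxP hxQ
  -- value of pnorm on a single
  have hsingle : ∀ x : X, pnorm Ps (Finsupp.single x 1) = 1 := by
    intro x
    obtain ⟨P₀, hP₀, hxP₀⟩ := hex x
    unfold pnorm
    rw [tsum_eq_single (⟨P₀, hP₀⟩ : Ps)]
    · rw [Finsupp.support_single_ne_zero x one_ne_zero]
      simp [Set.indicator_apply, hxP₀]
    · intro b hb
      have hxb : x ∉ (b : Set X) := by
        intro hxb
        exact hb (Subtype.ext (huniq b.2 hP₀ hxb hxP₀))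
      rw [Finsupp.support_single_ne_zero x one_ne_zero]
      simp [Set.indicator_apply, hxb]
  -- F is constant on pieces
  have hconst : ∀ Q ∈ Ps, ∀ x ∈ Q, ∀ y ∈ Q,
      F (Finsupp.single x 1) = F (Finsupp.single y 1) := by
    intro Q hQ x hxQ y hyQ
    rcases eq_or_ne x y with rfl | hxy
    · rfl
    set a : X →₀ ℝ := Finsupp.single x 1 - Finsupp.single y 1 with ha
    have hax : a x = 1 := by
      simp [ha, Finsupp.single_apply, hxy.symm]
    have hay : a y = -1 := by
      simp [ha, Finsupp.single_apply, hxy]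
    have hsupp : a.support ⊆ ({x, y} : Finset X) := by
      refine Finsupp.support_sub.trans ?_
      rw [Finsupp.support_single_ne_zero x one_ne_zero,
        Finsupp.support_single_ne_zero y one_ne_zero]
      intro z hz
      simpa using hz
    have hterm : ∀ P : Ps,
        |∑ z ∈ a.support, (P : Set X).indicator (fun w => a w) z| = 0 := by
      intro P
      have hsum : ∑ z ∈ a.support, (P : Set X).indicator (fun w => a w) z
          = ∑ z ∈ ({x, y} : Finset X), (P : Set X).indicator (fun w => a w) z := by
        refine Finset.sum_subset hsupp ?_
        intro z _ hz
        simp [Set.indicator_apply, Finsupp.notMem_support_iff.mp hz]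
      rw [hsum, Finset.sum_pair hxy]
      by_cases hPQ : (P : Set X) = Q
      · simp [Set.indicator_apply, hPQ, hxQ, hyQ, hax, hay]
      · have hx : x ∉ (P : Set X) := fun hx => hPQ (huniq P.2 hQ hx hxQ)
        have hy : y ∉ (P : Set X) := fun hy => hPQ (huniq P.2 hQ hy hyQ)
        simp [Set.indicator_apply, hx, hy]
    have h0 : pnorm Ps a = 0 := by
      unfold pnorm
      rw [tsum_congr hterm]
      exact tsum_zero
    have hFa : F a = 0 := by
      have := hF a
      rw [h0, mul_zero] at this
      exact abs_eq_zero.mp (le_antisymm this (abs_nonneg _))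
    have : F (Finsupp.single x 1) - F (Finsupp.single y 1) = 0 := by
      rw [← map_sub]; exact hFa
    linarith
  constructor
  · refine ⟨C, fun x => ?_⟩
    have := hF (Finsupp.single x 1)
    rwa [hsingle x, mul_one] at this
  · intro s _
    have hpre : (fun x : X => F (Finsupp.single x 1)) ⁻¹' s
        = ⋃₀ {P ∈ Ps | P ⊆ (fun x : X => F (Finsupp.single x 1)) ⁻¹' s} := by
      ext x
      constructor
      · intro hx
        obtain ⟨P₀, hP₀, hxP₀⟩ := hex x
        refine ⟨P₀, ⟨hP₀, fun y hy => ?_⟩, hxP₀⟩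
        show F (Finsupp.single y 1) ∈ s
        rw [hconst P₀ hP₀ y hy x hxP₀]
        exact hx
      · rintro ⟨P, ⟨_, hPs⟩, hxP⟩
        exact hPs hxP
    rw [hpre]
    exact MeasurableSet.sUnion (hcnt.mono (Set.sep_subset _ _))
      (fun P hP => hmeasP P hP.1)
end

section
/- Let G be a group acting by measurable automorphisms on a measurable space X in which every singleton {x} is measurable. Suppose there exists a G-invariant mean on B(X) but no G-invariant mean on ℓ∞(X). Then, for every countable subgroup H ≤ G and every countable H-invariant subset S ⊆ X, there exists an H-invariant mean on B(X∖S), where X∖S carries the subspace measurable structure and the restricted H-action. -/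
open scoped Pointwise

/-- `f` is bounded and measurable (an element of `B(X)`). -/
def IsBddMeas {X : Type*} [MeasurableSpace X] (f : X → ℝ) : Prop :=
  (∃ C, ∀ x, |f x| ≤ C) ∧ Measurable f

/-- `f` is bounded (an element of `ℓ∞(X)`). -/
def IsBdd {X : Type*} (f : X → ℝ) : Prop := ∃ C, ∀ x, |f x| ≤ C

/-- The `ℓ¹`-norm of a finitely supported function. -/
def onenorm {X : Type*} (a : X →₀ ℝ) : ℝ := ∑ x ∈ a.support, |a x|

/-- The action of a group element on finitely supported functions:
`(g • a)(x) = a (g⁻¹ • x)`. -/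
def fsAct {G X : Type*} [Group G] [MulAction G X] (g : G) (a : X →₀ ℝ) : X →₀ ℝ :=
  Finsupp.equivMapDomain (MulAction.toPerm g) a

section Helpers
variable {X : Type*} [MeasurableSpace X]

lemma bddMeas_add {f g : X → ℝ} (hf : IsBddMeas f) (hg : IsBddMeas g) :
    IsBddMeas (fun x => f x + g x) := by
  obtain ⟨⟨C, hC⟩, hfm⟩ := hf; obtain ⟨⟨D, hD⟩, hgm⟩ := hg
  exact ⟨⟨C + D, fun x => (abs_add_le _ _).trans (add_le_add (hC x) (hD x))⟩, hfm.add hgm⟩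

lemma bddMeas_smul (c : ℝ) {f : X → ℝ} (hf : IsBddMeas f) :
    IsBddMeas (fun x => c * f x) := by
  obtain ⟨⟨C, hC⟩, hfm⟩ := hf
  refine ⟨⟨|c| * C, fun x => ?_⟩, hfm.const_mul c⟩
  rw [abs_mul]
  exact mul_le_mul_of_nonneg_left (hC x) (abs_nonneg c)

lemma bddMeas_indicator_of_countable (hsing : ∀ x : X, MeasurableSet ({x} : Set X))
    {S : Set X} (hS : S.Countable) {f : X → ℝ} (hb : ∃ C, ∀ x, |f x| ≤ C) :
    IsBddMeas (S.indicator f) := by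
  haveI : MeasurableSingletonClass X := ⟨hsing⟩
  constructor
  · obtain ⟨C, hC⟩ := hb
    refine ⟨|C|, fun x => ?_⟩
    by_cases hx : x ∈ S
    · rw [Set.indicator_of_mem hx]
      exact (hC x).trans (le_abs_self C)
    · rw [Set.indicator_of_notMem hx]
      simp
  · intro B hB
    classical
    have hset : S.indicator f ⁻¹' B =
        (S ∩ S.indicator f ⁻¹' B) ∪ (Sᶜ ∩ if (0:ℝ) ∈ B then Set.univ else ∅) := by
      ext x
      by_cases hx : x ∈ S <;> by_cases h0 : (0:ℝ) ∈ B <;>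
        simp [hx, h0, Set.indicator_of_mem, Set.indicator_of_notMem]
    rw [hset]
    refine ((hS.mono Set.inter_subset_left).measurableSet).union
      (hS.measurableSet.compl.inter ?_)
    split <;> simp [MeasurableSet.univ]

end Helpers

theorem invariant_mean_on_complement {G X : Type*} [Group G] [MeasurableSpace X]
    [MulAction G X]
    (hmeas : ∀ g : G, Measurable (fun x : X => g • x))
    (hsing : ∀ x : X, MeasurableSet ({x} : Set X))
    (hex : ∃ μ : (X → ℝ) → ℝ, IsMean IsBddMeas μ ∧
      ∀ (g : G) (f : X → ℝ), IsBddMeas f → μ (fun x => f (g • x)) = μ f)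
    (hno : ¬ ∃ μ : (X → ℝ) → ℝ, IsMean IsBdd μ ∧
      ∀ (g : G) (f : X → ℝ), IsBdd f → μ (fun x => f (g • x)) = μ f)
    (H : Subgroup G) (hHc : (H : Set G).Countable)
    (S : Set X) (hSc : S.Countable) (hSinv : ∀ h ∈ H, h • S = S) :
    ∃ μ : (({x : X // x ∉ S}) → ℝ) → ℝ, IsMean IsBddMeas μ ∧
      ∀ h ∈ H, ∀ hinv : ∀ y : X, y ∉ S → h • y ∉ S,
        ∀ f : ({x : X // x ∉ S}) → ℝ, IsBddMeas f →
          μ (fun x => f ⟨h • (x : X), hinv x x.2⟩) = μ f := by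
  classical
  haveI : MeasurableSingletonClass X := ⟨hsing⟩
  obtain ⟨μ, ⟨hμ1, hμpos, hμadd, hμsmul⟩, hμinv⟩ := hex
  -- basic facts about μ
  have hmono : ∀ f g : X → ℝ, IsBddMeas f → IsBddMeas g → (∀ x, f x ≤ g x) → μ f ≤ μ g := by
    intro f g hf hg hle
    have h1 : IsBddMeas (fun x => (-1 : ℝ) * f x) := bddMeas_smul _ hf
    have h2 : 0 ≤ μ (fun x => g x + (-1 : ℝ) * f x) :=
      hμpos _ (bddMeas_add hg h1) (fun x => by linarith [hle x])
    have h3 : μ (fun x => g x + (-1 : ℝ) * f x) = μ g + (-1) * μ f := by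
      rw [hμadd _ _ hg h1, hμsmul _ _ hf]
    linarith
  -- the "measure" of a set
  set m : Set X → ℝ := fun T => μ (T.indicator fun _ => (1:ℝ)) with hm
  have hindbm : ∀ T : Set X, T.Countable → IsBddMeas (T.indicator fun _ => (1:ℝ)) :=
    fun T hT => bddMeas_indicator_of_countable hsing hT ⟨1, by simp⟩
  have hmnonneg : ∀ T : Set X, T.Countable → 0 ≤ m T := by
    intro T hT
    exact hμpos _ (hindbm T hT) (fun x => Set.indicator_nonneg (fun _ _ => zero_le_one) x)
  have hmle1 : ∀ T : Set X, T.Countable → m T ≤ 1 := by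
    intro T hT
    have := hmono _ _ (hindbm T hT) ⟨⟨1, fun _ => by simp⟩, measurable_const⟩
      (fun x => Set.indicator_le_self' (fun _ _ => zero_le_one) x)
    simpa [hμ1] using this
  have hmmono : ∀ A B : Set X, A ⊆ B → B.Countable → m A ≤ m B := by
    intro A B hAB hB
    refine hmono _ _ (hindbm A (hB.mono hAB)) (hindbm B hB) (fun x => ?_)
    by_cases hx : x ∈ A
    · rw [Set.indicator_of_mem hx, Set.indicator_of_mem (hAB hx)]
    · rw [Set.indicator_of_notMem hx]
      exact Set.indicator_nonneg (fun _ _ => zero_le_one) x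
  have hmadd : ∀ A B : Set X, A.Countable → B.Countable → Disjoint A B →
      m (A ∪ B) = m A + m B := by
    intro A B hA hB hd
    have hfun : (A ∪ B).indicator (fun _ => (1:ℝ)) =
        fun x => A.indicator (fun _ => (1:ℝ)) x + B.indicator (fun _ => (1:ℝ)) x := by
      funext x
      by_cases hx : x ∈ A
      · have hxB : x ∉ B := fun hxB => Set.disjoint_left.mp hd hx hxB
        simp [Set.indicator, hx, hxB]
      · by_cases hy : x ∈ B <;> simp [Set.indicator, hx, hy]
    rw [hm]
    simp only [hfun]
    exact hμadd _ _ (hindbm A hA) (hindbm B hB)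
  have hμ0 : μ (fun _ => (0:ℝ)) = 0 := by
    have := hμsmul 0 (fun _ => (1:ℝ)) ⟨⟨1, fun _ => by simp⟩, measurable_const⟩
    simpa using this
  have hmempty : m (∅ : Set X) = 0 := by
    rw [hm]; simp only [Set.indicator_empty]; exact hμ0
  have hminv : ∀ (g : G) (T : Set X), T.Countable → m (g • T) = m T := by
    intro g T hT
    have hgT : (g • T).Countable := by
      rw [← Set.image_smul]; exact hT.image _
    have h1 := hμinv g ((g • T).indicator fun _ => (1:ℝ)) (hindbm _ hgT)
    have h2 : (fun x => (g • T).indicator (fun _ => (1:ℝ)) (g • x)) =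
        T.indicator (fun _ => (1:ℝ)) := by
      funext x
      by_cases hx : x ∈ T
      · rw [Set.indicator_of_mem (Set.smul_mem_smul_set hx), Set.indicator_of_mem hx]
      · rw [Set.indicator_of_notMem (fun h => hx ((Set.smul_mem_smul_set_iff).mp h)),
          Set.indicator_of_notMem hx]
    rw [h2] at h1
    exact h1.symm
  -- the supremum of measures of countable sets
  set Cs : Set ℝ := {r : ℝ | ∃ T : Set X, T.Countable ∧ m T = r} with hCs
  have hCne : Cs.Nonempty := ⟨0, ∅, Set.countable_empty, hmempty⟩
  have hCbdd : BddAbove Cs := by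
    refine ⟨1, fun r hr => ?_⟩
    obtain ⟨T, hT, rfl⟩ := hr
    exact hmle1 T hT
  set c : ℝ := sSup Cs with hc
  have hmemle : ∀ T : Set X, T.Countable → m T ≤ c := fun T hT =>
    le_csSup hCbdd ⟨T, hT, rfl⟩
  -- choose a sequence approaching the sup
  have hseq : ∀ n : ℕ, ∃ T : Set X, T.Countable ∧ c - 1 / (n + 1) < m T := by
    intro n
    have hlt : c - 1 / ((n : ℝ) + 1) < c := by
      have : (0:ℝ) < 1 / ((n : ℝ) + 1) := by positivity
      linarith
    obtain ⟨r, hrmem, hr⟩ := exists_lt_of_lt_csSup hCne hlt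
    obtain ⟨T, hT, rfl⟩ := hrmem
    exact ⟨T, hT, hr⟩
  choose T hTc hTlt using hseq
  set Sstar : Set X := ⋃ n, T n with hSstar
  have hSstarC : Sstar.Countable := Set.countable_iUnion hTc
  have hmSstar : m Sstar = c := by
    refine le_antisymm (hmemle _ hSstarC) ?_
    by_contra hlt
    push_neg at hlt
    obtain ⟨n, hn⟩ := exists_nat_one_div_lt (show (0:ℝ) < c - m Sstar by linarith)
    have h1 : m (T n) ≤ m Sstar := hmmono _ _ (Set.subset_iUnion T n) hSstarC
    have h2 := hTlt n
    linarith
  -- countable sets have null measure outside Sstar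
  have claimnull : ∀ T' : Set X, T'.Countable → m (T' \ Sstar) = 0 := by
    intro T' hT'
    have h1 : m (Sstar ∪ T') ≤ c := hmemle _ (hSstarC.union hT')
    have h2 : Sstar ∪ T' = Sstar ∪ (T' \ Sstar) := (Set.union_diff_self).symm
    have h3 : m (Sstar ∪ (T' \ Sstar)) = m Sstar + m (T' \ Sstar) :=
      hmadd _ _ hSstarC (hT'.mono Set.diff_subset) disjoint_sdiff_self_right
    have h4 : 0 ≤ m (T' \ Sstar) := hmnonneg _ (hT'.mono Set.diff_subset)
    rw [h2, h3, hmSstar] at h1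
    linarith
  have hnull1 : ∀ g : G, m ((g⁻¹ • Sstar) \ Sstar) = 0 := by
    intro g
    refine claimnull _ ?_
    rw [← Set.image_smul]; exact hSstarC.image _
  have hnull2 : ∀ g : G, m (Sstar \ (g⁻¹ • Sstar)) = 0 := by
    intro g
    have h1 : g • (Sstar \ (g⁻¹ • Sstar)) = (g • Sstar) \ Sstar := by
      rw [Set.smul_set_sdiff, smul_inv_smul]
    have h2 : m (g • (Sstar \ (g⁻¹ • Sstar))) = m (Sstar \ (g⁻¹ • Sstar)) :=
      hminv g _ (hSstarC.mono Set.diff_subset)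
    rw [h1] at h2
    rw [← h2]
    exact claimnull _ (by rw [← Set.image_smul]; exact hSstarC.image _)
  -- if a bounded measurable function vanishes outside a null countable set, μ f = 0
  have hnullf : ∀ (N : Set X) (f : X → ℝ), N.Countable → m N = 0 → IsBddMeas f →
      (∀ x, x ∉ N → f x = 0) → μ f = 0 := by
    intro N f hN hN0 hf hsupp
    obtain ⟨C, hC⟩ := hf.1
    have hub : ∀ x, f x ≤ |C| * N.indicator (fun _ => (1:ℝ)) x := by
      intro x
      by_cases hx : x ∈ N
      · rw [Set.indicator_of_mem hx]
        have := (abs_le.mp ((hC x).trans (le_abs_self C))).2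
        linarith
      · rw [Set.indicator_of_notMem hx, hsupp x hx]
        simp
    have hlb : ∀ x, (-|C|) * N.indicator (fun _ => (1:ℝ)) x ≤ f x := by
      intro x
      by_cases hx : x ∈ N
      · rw [Set.indicator_of_mem hx]
        have := (abs_le.mp ((hC x).trans (le_abs_self C))).1
        linarith
      · rw [Set.indicator_of_notMem hx, hsupp x hx]
        simp
    have h1 : μ f ≤ μ (fun x => |C| * N.indicator (fun _ => (1:ℝ)) x) :=
      hmono _ _ hf (bddMeas_smul _ (hindbm N hN)) hub
    have h2 : μ (fun x => (-|C|) * N.indicator (fun _ => (1:ℝ)) x) ≤ μ f :=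
      hmono _ _ (bddMeas_smul _ (hindbm N hN)) hf hlb
    rw [hμsmul _ _ (hindbm N hN)] at h1 h2
    have : m N = μ (N.indicator fun _ => (1:ℝ)) := rfl
    rw [← this, hN0] at h1 h2
    simp at h1 h2
    linarith
  -- Claim: c = 0, else we could build an invariant mean on ℓ∞(X).
  have hc0 : c = 0 := by
    by_contra hcne
    have hcpos : 0 < c := lt_of_le_of_ne (hmempty ▸ hmemle ∅ Set.countable_empty) (Ne.symm hcne)
    apply hno
    refine ⟨fun f => c⁻¹ * μ (Sstar.indicator f), ⟨?_, ?_, ?_, ?_⟩, ?_⟩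
    · show c⁻¹ * μ (Sstar.indicator fun _ => (1:ℝ)) = 1
      have : μ (Sstar.indicator fun _ => (1:ℝ)) = c := hmSstar
      rw [this, inv_mul_cancel₀ hcne]
    · intro f hf hfpos
      refine mul_nonneg (by positivity) (hμpos _ (bddMeas_indicator_of_countable hsing hSstarC hf)
        (fun x => Set.indicator_nonneg (fun y _ => hfpos y) x))
    · intro f g hf hg
      show c⁻¹ * μ (Sstar.indicator fun x => f x + g x) =
        c⁻¹ * μ (Sstar.indicator f) + c⁻¹ * μ (Sstar.indicator g)
      have hfun : Sstar.indicator (fun x => f x + g x) =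
          fun x => Sstar.indicator f x + Sstar.indicator g x := by
        funext x
        by_cases hx : x ∈ Sstar <;> simp [Set.indicator, hx]
      rw [hfun, hμadd _ _ (bddMeas_indicator_of_countable hsing hSstarC hf)
        (bddMeas_indicator_of_countable hsing hSstarC hg)]
      ring
    · intro a f hf
      show c⁻¹ * μ (Sstar.indicator fun x => a * f x) = a * (c⁻¹ * μ (Sstar.indicator f))
      have hfun : Sstar.indicator (fun x => a * f x) =
          fun x => a * Sstar.indicator f x := by
        funext x
        by_cases hx : x ∈ Sstar <;> simp [Set.indicator, hx]
      rw [hfun, hμsmul _ _ (bddMeas_indicator_of_countable hsing hSstarC hf)]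
      ring
    · -- invariance
      intro g f hf
      show c⁻¹ * μ (Sstar.indicator fun x => f (g • x)) = c⁻¹ * μ (Sstar.indicator f)
      set F : X → ℝ := fun x => f (g • x) with hF
      have hFb : ∃ C, ∀ x, |F x| ≤ C := by
        obtain ⟨C, hC⟩ := hf
        exact ⟨C, fun x => hC (g • x)⟩
      set B : Set X := g⁻¹ • Sstar with hB
      have hBc : B.Countable := by
        rw [hB, ← Set.image_smul]; exact hSstarC.image _
      have hpB : IsBddMeas (B.indicator F) := bddMeas_indicator_of_countable hsing hBc hFb
      have hqB : IsBddMeas ((Sstar \ B).indicator F) :=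
        bddMeas_indicator_of_countable hsing (hSstarC.mono Set.diff_subset) hFb
      have hrB : IsBddMeas ((B \ Sstar).indicator F) :=
        bddMeas_indicator_of_countable hsing (hBc.mono Set.diff_subset) hFb
      -- decomposition
      have hdecomp : Sstar.indicator F = fun x => B.indicator F x +
          ((Sstar \ B).indicator F x + (-1) * (B \ Sstar).indicator F x) := by
        funext x
        by_cases hxA : x ∈ Sstar <;> by_cases hxB : x ∈ B <;>
          simp [Set.indicator, hxA, hxB]
      have hq0 : μ ((Sstar \ B).indicator F) = 0 :=
        hnullf _ _ (hSstarC.mono Set.diff_subset) (hnull2 g) hqB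
          (fun x hx => Set.indicator_of_notMem hx F)
      have hr0 : μ ((B \ Sstar).indicator F) = 0 :=
        hnullf _ _ (hBc.mono Set.diff_subset) (hnull1 g) hrB
          (fun x hx => Set.indicator_of_notMem hx F)
      have hsum : μ (Sstar.indicator F) = μ (B.indicator F) +
          (μ ((Sstar \ B).indicator F) + (-1) * μ ((B \ Sstar).indicator F)) := by
        rw [hdecomp]
        rw [hμadd _ _ hpB (bddMeas_add hqB (bddMeas_smul _ hrB)),
          hμadd _ _ hqB (bddMeas_smul _ hrB), hμsmul _ _ hrB]
      -- pullback identity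
      have hpull : (fun x => Sstar.indicator f (g • x)) = B.indicator F := by
        funext x
        by_cases hx : g • x ∈ Sstar
        · rw [Set.indicator_of_mem hx,
            Set.indicator_of_mem (Set.mem_inv_smul_set_iff.mpr hx)]
        · rw [Set.indicator_of_notMem hx,
            Set.indicator_of_notMem (fun h => hx (Set.mem_inv_smul_set_iff.mp h))]
      have hinvμ := hμinv g (Sstar.indicator f)
        (bddMeas_indicator_of_countable hsing hSstarC hf)
      rw [hpull] at hinvμ
      rw [hsum, hq0, hr0, hinvμ]
      ring
  -- hence m S = 0
  have hmS : m S = 0 :=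
    le_antisymm (hc0 ▸ hmemle S hSc) (hmnonneg S hSc)
  -- construct the mean on the complement
  set E : ({x : X // x ∉ S} → ℝ) → X → ℝ :=
    fun f x => if h : x ∈ S then 0 else f ⟨x, h⟩ with hE
  have hEbm : ∀ f : {x : X // x ∉ S} → ℝ, IsBddMeas f → IsBddMeas (E f) := by
    intro f hf
    obtain ⟨⟨C, hC⟩, hfm⟩ := hf
    constructor
    · refine ⟨|C|, fun x => ?_⟩
      by_cases hx : x ∈ S
      · simp [hE, hx]
      · simp only [hE, dif_neg hx]
        exact (hC _).trans (le_abs_self C)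
    · exact Measurable.dite measurable_const hfm hSc.measurableSet
  refine ⟨fun f => μ (E f), ⟨?_, ?_, ?_, ?_⟩, ?_⟩
  · show μ (E fun _ => (1:ℝ)) = 1
    have hfun : (fun x => E (fun _ => (1:ℝ)) x + S.indicator (fun _ => (1:ℝ)) x) =
        fun _ => (1:ℝ) := by
      funext x
      by_cases hx : x ∈ S <;> simp [hE, Set.indicator, hx]
    have h1 := hμadd (E fun _ => (1:ℝ)) (S.indicator fun _ => (1:ℝ))
      (hEbm _ ⟨⟨1, fun _ => by simp⟩, measurable_const⟩) (hindbm S hSc)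
    rw [hfun, hμ1] at h1
    have : m S = μ (S.indicator fun _ => (1:ℝ)) := rfl
    rw [← this, hmS] at h1
    linarith
  · intro f hf hfpos
    refine hμpos _ (hEbm f hf) (fun x => ?_)
    by_cases hx : x ∈ S <;> simp [hE, hx]
    exact hfpos _
  · intro f g hf hg
    have hfun : E (fun x => f x + g x) = fun x => E f x + E g x := by
      funext x
      by_cases hx : x ∈ S <;> simp [hE, hx]
    show μ (E fun x => f x + g x) = μ (E f) + μ (E g)
    rw [hfun]
    exact hμadd _ _ (hEbm f hf) (hEbm g hg)
  · intro a f hf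
    have hfun : E (fun x => a * f x) = fun x => a * E f x := by
      funext x
      by_cases hx : x ∈ S <;> simp [hE, hx]
    show μ (E fun x => a * f x) = a * μ (E f)
    rw [hfun]
    exact hμsmul _ _ (hEbm f hf)
  · intro h hH hinvS f hf
    show μ (E fun x => f ⟨h • (x : X), hinvS x x.2⟩) = μ (E f)
    have hkey : E (fun x => f ⟨h • (x : X), hinvS x x.2⟩) = fun x => E f (h • x) := by
      funext x
      by_cases hx : x ∈ S
      · have hhx : h • x ∈ S := by
          rw [← hSinv h hH]
          exact Set.smul_mem_smul_set hx
        simp [hE, hx, hhx]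
      · have hhx : h • x ∉ S := hinvS x hx
        simp [hE, hx, hhx]
    rw [hkey]
    exact hμinv (h : G) (E f) (hEbm f hf)
end
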